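/- arXiv:2003.11500 — 4 statements merged into one kernel-verified Lean document; each statement's English description precedes it below -/
import Mathlib

section
/- Let f : ℝⁿ → ℝⁿ, let h : ℝⁿ → ℝ be differentiable, and let γ > 0. Suppose ⟨∇h(x), f(x)⟩ ≥ −γ·h(x) for all x ∈ ℝⁿ. Then for every differentiable curve x : [0,∞) → ℝⁿ satisfying x'(t) = f(x(t)) for all t ≥ 0 and h(x(0)) ≥ 0, one has h(x(t)) ≥ h(x(0))·exp(−γ·t) ≥ 0 for all t ≥ 0. In particular, the admissible set C = {x ∈ ℝⁿ : h(x) ≥ 0} is forward invariant: every solution starting in C remains in C for all t ≥ 0. -/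
open RealInnerProductSpace Set Real

/-! Along a solution, `φ(t) = h(x(t))` satisfies `φ' = ⟪∇h(x), f(x)⟫ ≥ -γ φ`, so `-φ` obeys the
linear Grönwall bound `-φ(t) ≤ -φ(0) e^{-γt}`; the lower bound is nonnegative when `φ(0) ≥ 0`. -/

theorem HasGradientAt.comp_hasDerivAt {F : Type*} [NormedAddCommGroup F] [InnerProductSpace ℝ F]
    [CompleteSpace F] {h : F → ℝ} {h' : F} {x : ℝ → F} {x' : F} {t : ℝ}
    (hh : HasGradientAt h h' (x t)) (hx : HasDerivAt x x' t) :
    HasDerivAt (h ∘ x) ⟪h', x'⟫ t := by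
  simpa [InnerProductSpace.toDual_apply_apply] using hh.hasFDerivAt.comp_hasDerivAt t hx

theorem mul_exp_le_of_deriv_right_ge {φ φ' : ℝ → ℝ} {γ a : ℝ} (hφ : ContinuousOn φ (Ici a))
    (hφ' : ∀ s ∈ Ici a, HasDerivWithinAt φ (φ' s) (Ici s) s)
    (bound : ∀ s ∈ Ici a, -γ * φ s ≤ φ' s) {t : ℝ} (ht : a ≤ t) :
    φ a * exp (-γ * (t - a)) ≤ φ t := by
  have hgronwall := le_gronwallBound_of_liminf_deriv_right_le (f := -φ) (f' := -φ')
    (δ := -φ a) (K := -γ) (ε := 0) (b := t) (hφ.mono Icc_subset_Ici_self).neg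
    (fun s hs _ hr => ((hφ' s (Ico_subset_Ici_self hs)).neg).liminf_right_slope_le hr) le_rfl
    (fun s hs => by simpa [neg_le] using bound s (Ico_subset_Ici_self hs)) t ⟨ht, le_rfl⟩
  rw [gronwallBound_ε0] at hgronwall
  simpa using hgronwall

theorem zbf_forward_invariance_general (n : ℕ)
    (f : EuclideanSpace ℝ (Fin n) → EuclideanSpace ℝ (Fin n))
    (h : EuclideanSpace ℝ (Fin n) → ℝ) (hdiff : Differentiable ℝ h)
    (γ : ℝ)
    (hbarrier : ∀ x : EuclideanSpace ℝ (Fin n), ⟪gradient h x, f x⟫ ≥ -γ * h x) :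
    ∀ x : ℝ → EuclideanSpace ℝ (Fin n),
      (∀ t : ℝ, 0 ≤ t → HasDerivAt x (f (x t)) t) →
      0 ≤ h (x 0) →
      ∀ t : ℝ, 0 ≤ t →
        h (x t) ≥ h (x 0) * Real.exp (-γ * t) ∧
        h (x 0) * Real.exp (-γ * t) ≥ 0 ∧
        x t ∈ {p : EuclideanSpace ℝ (Fin n) | 0 ≤ h p} := by
  intro x hx h0 t ht
  have hcomp (s : ℝ) (hs : s ∈ Ici 0) : HasDerivAt (h ∘ x) ⟪gradient h (x s), f (x s)⟫ s :=
    (hdiff _).hasGradientAt.comp_hasDerivAt (hx s hs)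
  have hlower : h (x 0) * exp (-γ * t) ≤ h (x t) := by
    simpa using mul_exp_le_of_deriv_right_ge
      (fun s hs => (hcomp s hs).continuousAt.continuousWithinAt)
      (fun s hs => (hcomp s hs).hasDerivWithinAt) (fun s _ => hbarrier (x s)) ht
  have hnonneg : 0 ≤ h (x 0) * exp (-γ * t) := mul_nonneg h0 (exp_pos _).le
  exact ⟨hlower, hnonneg, hnonneg.trans hlower⟩

/-- If h is a zeroing barrier function for ẋ = f(x), i.e.
⟨∇h(x), f(x)⟩ ≥ −γ·h(x) everywhere with γ > 0, then along every solution starting with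
h(x(0)) ≥ 0 we have h(x(t)) ≥ h(x(0))·exp(−γt) ≥ 0, so C = {x : h(x) ≥ 0} is
forward invariant. -/
theorem zbf_forward_invariance (n : ℕ)
    (f : EuclideanSpace ℝ (Fin n) → EuclideanSpace ℝ (Fin n))
    (h : EuclideanSpace ℝ (Fin n) → ℝ) (hdiff : Differentiable ℝ h)
    (γ : ℝ) (hγ : 0 < γ)
    (hbarrier : ∀ x : EuclideanSpace ℝ (Fin n), ⟪gradient h x, f x⟫ ≥ -γ * h x) :
    ∀ x : ℝ → EuclideanSpace ℝ (Fin n),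
      (∀ t : ℝ, 0 ≤ t → HasDerivAt x (f (x t)) t) →
      0 ≤ h (x 0) →
      ∀ t : ℝ, 0 ≤ t →
        h (x t) ≥ h (x 0) * Real.exp (-γ * t) ∧
        h (x 0) * Real.exp (-γ * t) ≥ 0 ∧
        x t ∈ {p : EuclideanSpace ℝ (Fin n) | 0 ≤ h p} :=
  zbf_forward_invariance_general n f h hdiff γ hbarrier
end

section
/- Let h : ℝⁿ → ℝ be continuously differentiable, let f : ℝⁿ → ℝⁿ be continuous, and suppose the admissible set C = {x ∈ ℝⁿ : h(x) ≥ 0} is nonempty and compact. If ⟨∇h(x), f(x)⟩ > 0 for every x with h(x) = 0 (the boundary of C), then for each integer k ≥ 1 there exists a constant γ > 0 such that ⟨∇h(x), f(x)⟩ ≥ −γ·h(x)^k for all x with h(x) > 0 (the interior of C). -/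
/-!
Let `g x = ⟪∇h x, f x⟫`. The set `K = {h ≥ 0} ∩ {g ≤ 0}` is compact and, since `g > 0` where
`h = 0`, the function `h` is positive on it; hence `-g / h ^ k` is continuous on `K` and bounded
above by some `γ > 0`. Off `K` the inequality holds because `g > 0 ≥ -γ h ^ k` there.
-/

open RealInnerProductSpace

theorem IsCompact.exists_pos_forall_neg_mul_pow_le {X : Type*} [TopologicalSpace X] {K : Set X}
    (hK : IsCompact K) {g h : X → ℝ} (hg : ContinuousOn g K) (hh : ContinuousOn h K)
    (hpos : ∀ x ∈ K, 0 < h x) (k : ℕ) : ∃ γ > 0, ∀ x ∈ K, -γ * h x ^ k ≤ g x := by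
  have hquot : ContinuousOn (fun x => -g x / h x ^ k) K :=
    hg.neg.div (hh.pow k) fun x hx => (pow_pos (hpos x hx) k).ne'
  obtain ⟨M, hM⟩ := hK.bddAbove_image hquot
  refine ⟨max M 1, by positivity, fun x hx => ?_⟩
  have hxk : 0 < h x ^ k := pow_pos (hpos x hx) k
  have hle : -g x / h x ^ k ≤ max M 1 := (hM ⟨x, hx, rfl⟩).trans (le_max_left M 1)
  rw [div_le_iff₀ hxk] at hle
  linarith

theorem ContDiff.continuous_inner_gradient {E : Type*} [NormedAddCommGroup E]
    [InnerProductSpace ℝ E] [CompleteSpace E] {h : E → ℝ} (hh : ContDiff ℝ 1 h) {f : E → E}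
    (hf : Continuous f) : Continuous fun x => ⟪gradient h x, f x⟫ := by
  simp_rw [inner_gradient_left]
  exact (hh.continuous_fderiv one_ne_zero).clm_apply hf

theorem zbf_gain_existence_general (n : ℕ)
    (h : EuclideanSpace ℝ (Fin n) → ℝ) (hh : ContDiff ℝ 1 h)
    (f : EuclideanSpace ℝ (Fin n) → EuclideanSpace ℝ (Fin n)) (hf : Continuous f)
    (hcpt : IsCompact {x : EuclideanSpace ℝ (Fin n) | 0 ≤ h x})
    (hbdry : ∀ x : EuclideanSpace ℝ (Fin n), h x = 0 → 0 < ⟪gradient h x, f x⟫) :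
    ∀ k : ℕ, 1 ≤ k → ∃ γ : ℝ, 0 < γ ∧
      ∀ x : EuclideanSpace ℝ (Fin n), 0 < h x →
        ⟪gradient h x, f x⟫ ≥ -γ * (h x) ^ k := by
  intro k _
  have hg := hh.continuous_inner_gradient hf
  set K := {x | 0 ≤ h x} ∩ {x | ⟪gradient h x, f x⟫ ≤ 0}
  have hK : IsCompact K := hcpt.inter_right (isClosed_le hg continuous_const)
  have hpos : ∀ x ∈ K, 0 < h x := fun x ⟨hx, hgx⟩ =>
    hx.lt_of_ne fun hx0 => (hbdry x hx0.symm).not_ge hgx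
  obtain ⟨γ, hγ, hbound⟩ :=
    hK.exists_pos_forall_neg_mul_pow_le hg.continuousOn hh.continuous.continuousOn hpos k
  refine ⟨γ, hγ, fun x hx => ?_⟩
  rcases le_or_gt ⟪gradient h x, f x⟫ 0 with hgx | hgx
  · exact hbound x ⟨hx.le, hgx⟩
  · have : 0 ≤ γ * h x ^ k := by positivity
    linarith

/-- Lemma 1 of the paper: Let h be C¹, f continuous, and suppose the
admissible set C = {x : h(x) ≥ 0} is nonempty and compact. If ⟨∇h(x), f(x)⟩ > 0 on the
boundary {h = 0}, then for each k ≥ 1 there is γ > 0 with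
⟨∇h(x), f(x)⟩ ≥ −γ·h(x)^k on the interior {h > 0}. -/
theorem zbf_gain_existence (n : ℕ)
    (h : EuclideanSpace ℝ (Fin n) → ℝ) (hh : ContDiff ℝ 1 h)
    (f : EuclideanSpace ℝ (Fin n) → EuclideanSpace ℝ (Fin n)) (hf : Continuous f)
    (hne : {x : EuclideanSpace ℝ (Fin n) | 0 ≤ h x}.Nonempty)
    (hcpt : IsCompact {x : EuclideanSpace ℝ (Fin n) | 0 ≤ h x})
    (hbdry : ∀ x : EuclideanSpace ℝ (Fin n), h x = 0 → 0 < ⟪gradient h x, f x⟫) :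
    ∀ k : ℕ, 1 ≤ k → ∃ γ : ℝ, 0 < γ ∧
      ∀ x : EuclideanSpace ℝ (Fin n), 0 < h x →
        ⟪gradient h x, f x⟫ ≥ -γ * (h x) ^ k :=
  zbf_gain_existence_general n h hh f hf hcpt hbdry
end

section
/- Let f : ℝⁿ → ℝⁿ, let n ∈ ℝⁿ be nonzero, let a ∈ ℝ, let γ > 0, and set h(x) = ⟨n, x⟩ + a. Define the control law u*(x) = (max(0, −(⟨n, f(x)⟩ + γ·h(x))) / ‖n‖²) · n. Then ⟨n, f(x) + u*(x)⟩ ≥ −γ·h(x) for all x ∈ ℝⁿ, and consequently every differentiable curve x : [0,∞) → ℝⁿ satisfying x'(t) = f(x(t)) + u*(x(t)) for all t ≥ 0 with h(x(0)) ≥ 0 satisfies h(x(t)) ≥ 0 for all t ≥ 0. -/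
/-!
The controller adds to `f x` exactly the multiple of `n` needed to lift `⟪n, f x⟫` up to
`-γ h x` when it falls short, so `⟪n, f x + u x⟫ = max ⟪n, f x⟫ (-γ h x)`. Along a trajectory
`g t = h (x t)` therefore satisfies `g' ≥ -γ g`, which makes `exp (γ t) g t` nondecreasing; it
starts nonnegative, so `g` stays nonnegative.
-/

open RealInnerProductSpace

section Barrier

variable {E : Type*} [NormedAddCommGroup E] [InnerProductSpace ℝ E]

theorem inner_add_smul_div_norm_sq {n : E} (hn : n ≠ 0) (v : E) (r : ℝ) :
    ⟪n, v + (r / ‖n‖ ^ 2) • n⟫ = ⟪n, v⟫ + r := by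
  have : ‖n‖ ^ 2 ≠ 0 := by positivity
  rw [inner_add_right, real_inner_smul_right, real_inner_self_eq_norm_sq, div_mul_cancel₀ _ this]

theorem le_inner_add_barrier_correction {n : E} (hn : n ≠ 0) (v : E) (c : ℝ) :
    -c ≤ ⟪n, v + (max 0 (-(⟪n, v⟫ + c)) / ‖n‖ ^ 2) • n⟫ := by
  rw [inner_add_smul_div_norm_sq hn]
  linarith [le_max_right 0 (-(⟪n, v⟫ + c))]

theorem HasDerivAt.inner_const_left_add {x : ℝ → E} {x' : E} {t : ℝ} (hx : HasDerivAt x x' t)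
    (n : E) (a : ℝ) : HasDerivAt (fun s => ⟪n, x s⟫ + a) ⟪n, x'⟫ t := by
  simpa using ((hasDerivAt_const t n).inner ℝ hx).add_const a

end Barrier

theorem nonneg_of_hasDerivAt_ge_neg_mul {g g' : ℝ → ℝ} {γ : ℝ}
    (hg : ∀ t, 0 ≤ t → HasDerivAt g (g' t) t) (hg' : ∀ t, 0 ≤ t → -γ * g t ≤ g' t)
    (h0 : 0 ≤ g 0) {t : ℝ} (ht : 0 ≤ t) : 0 ≤ g t := by
  set F : ℝ → ℝ := fun s => Real.exp (γ * s) * g s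
  have hF : ∀ s, 0 ≤ s → HasDerivAt F (Real.exp (γ * s) * (γ * g s + g' s)) s := fun s hs => by
    have hexp : HasDerivAt (fun s => Real.exp (γ * s)) (Real.exp (γ * s) * γ) s := by
      simpa using ((hasDerivAt_id s).const_mul γ).exp
    exact (hexp.mul (hg s hs)).congr_deriv (by ring)
  have hmono : MonotoneOn F (Set.Ici 0) := by
    refine monotoneOn_of_hasDerivWithinAt_nonneg (convex_Ici 0)
      (fun s hs => (hF s hs).continuousAt.continuousWithinAt)
      (fun s hs => (hF s (interior_subset hs)).hasDerivWithinAt) (fun s hs => ?_)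
    have : 0 ≤ γ * g s + g' s := by linarith [hg' s (interior_subset hs)]
    positivity
  have hFt : F 0 ≤ F t := hmono Set.self_mem_Ici ht ht
  simp only [F, mul_zero, Real.exp_zero, one_mul] at hFt
  exact nonneg_of_mul_nonneg_right (h0.trans hFt) (Real.exp_pos _)

theorem linear_zcbf_controller_general (d : ℕ)
    (f : EuclideanSpace ℝ (Fin d) → EuclideanSpace ℝ (Fin d))
    (nv : EuclideanSpace ℝ (Fin d)) (hnv : nv ≠ 0) (a γ : ℝ)
    (h : EuclideanSpace ℝ (Fin d) → ℝ)
    (hdef : ∀ x : EuclideanSpace ℝ (Fin d), h x = ⟪nv, x⟫ + a)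
    (u : EuclideanSpace ℝ (Fin d) → EuclideanSpace ℝ (Fin d))
    (udef : ∀ x : EuclideanSpace ℝ (Fin d),
      u x = (max 0 (-(⟪nv, f x⟫ + γ * h x)) / ‖nv‖ ^ 2) • nv) :
    (∀ x : EuclideanSpace ℝ (Fin d), ⟪nv, f x + u x⟫ ≥ -γ * h x) ∧
    ∀ x : ℝ → EuclideanSpace ℝ (Fin d),
      (∀ t : ℝ, 0 ≤ t → HasDerivAt x (f (x t) + u (x t)) t) →
      0 ≤ h (x 0) →
      ∀ t : ℝ, 0 ≤ t → 0 ≤ h (x t) := by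
  have barrier : ∀ x, ⟪nv, f x + u x⟫ ≥ -γ * h x := fun x => by
    rw [udef, neg_mul]
    exact le_inner_add_barrier_correction hnv (f x) (γ * h x)
  refine ⟨barrier, fun x hx h0 t ht => ?_⟩
  have hh : h = fun y => ⟪nv, y⟫ + a := funext hdef
  have hderiv : ∀ s, 0 ≤ s → HasDerivAt (fun s => h (x s)) ⟪nv, f (x s) + u (x s)⟫ s :=
    fun s hs => by simpa only [hh] using (hx s hs).inner_const_left_add nv a
  exact nonneg_of_hasDerivAt_ge_neg_mul hderiv (fun s _ => barrier (x s)) h0 ht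

/-- For the linear ZCBF h(x) = ⟨n, x⟩ + a with n ≠ 0 and γ > 0, the analytic
QP solution u*(x) = (max(0, −(⟨n, f(x)⟩ + γ·h(x))) / ‖n‖²)·n satisfies the barrier
constraint ⟨n, f(x) + u*(x)⟩ ≥ −γ·h(x) everywhere, hence every solution of
ẋ = f(x) + u*(x) starting in the half-space {h ≥ 0} stays in it. -/
theorem linear_zcbf_controller (d : ℕ)
    (f : EuclideanSpace ℝ (Fin d) → EuclideanSpace ℝ (Fin d))
    (nv : EuclideanSpace ℝ (Fin d)) (hnv : nv ≠ 0) (a γ : ℝ) (hγ : 0 < γ)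
    (h : EuclideanSpace ℝ (Fin d) → ℝ)
    (hdef : ∀ x : EuclideanSpace ℝ (Fin d), h x = ⟪nv, x⟫ + a)
    (u : EuclideanSpace ℝ (Fin d) → EuclideanSpace ℝ (Fin d))
    (udef : ∀ x : EuclideanSpace ℝ (Fin d),
      u x = (max 0 (-(⟪nv, f x⟫ + γ * h x)) / ‖nv‖ ^ 2) • nv) :
    (∀ x : EuclideanSpace ℝ (Fin d), ⟪nv, f x + u x⟫ ≥ -γ * h x) ∧
    ∀ x : ℝ → EuclideanSpace ℝ (Fin d),
      (∀ t : ℝ, 0 ≤ t → HasDerivAt x (f (x t) + u (x t)) t) →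
      0 ≤ h (x 0) →
      ∀ t : ℝ, 0 ≤ t → 0 ≤ h (x t) :=
  linear_zcbf_controller_general d f nv hnv a γ h hdef u udef
end

section
/- Let f : ℝⁿ → ℝⁿ be Lipschitz continuous with constant L, let n ∈ ℝⁿ be nonzero, let a ∈ ℝ, let γ > 0, and set h(x) = ⟨n, x⟩ + a. Then the control law u*(x) = (max(0, −(⟨n, f(x)⟩ + γ·h(x))) / ‖n‖²) · n is Lipschitz continuous with constant L + γ. -/
open RealInnerProductSpace
open scoped NNReal

/-- If f is L-Lipschitz, n ≠ 0, γ > 0, and h(x) = ⟨n, x⟩ + a, then the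
control law u*(x) = (max(0, −(⟨n, f(x)⟩ + γ·h(x))) / ‖n‖²)·n is Lipschitz continuous
with constant L + γ. -/
theorem linear_zcbf_controller_lipschitz (d : ℕ)
    (f : EuclideanSpace ℝ (Fin d) → EuclideanSpace ℝ (Fin d))
    (L : ℝ≥0) (hf : LipschitzWith L f)
    (nv : EuclideanSpace ℝ (Fin d)) (hnv : nv ≠ 0) (a : ℝ) (γ : ℝ≥0) (hγ : 0 < γ)
    (h : EuclideanSpace ℝ (Fin d) → ℝ)
    (hdef : ∀ x : EuclideanSpace ℝ (Fin d), h x = ⟪nv, x⟫ + a)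
    (u : EuclideanSpace ℝ (Fin d) → EuclideanSpace ℝ (Fin d))
    (udef : ∀ x : EuclideanSpace ℝ (Fin d),
      u x = (max 0 (-(⟪nv, f x⟫ + (γ : ℝ) * h x)) / ‖nv‖ ^ 2) • nv) :
    LipschitzWith (L + γ) u := by
  have hn : (0:ℝ) < ‖nv‖ := norm_pos_iff.mpr hnv
  apply LipschitzWith.of_dist_le_mul
  intro x y
  set p : ℝ := -(⟪nv, f x⟫ + (γ : ℝ) * h x) with hp
  set q : ℝ := -(⟪nv, f y⟫ + (γ : ℝ) * h y) with hq
  have key : |max 0 p - max 0 q| ≤ ((L:ℝ) + γ) * ‖nv‖ * dist x y := by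
    have h1 : |max 0 p - max 0 q| ≤ |p - q| := by
      rw [max_comm 0 p, max_comm 0 q]; exact abs_max_sub_max_le_abs p q 0
    have h2 : p - q = -⟪nv, f x - f y⟫ - (γ:ℝ) * ⟪nv, x - y⟫ := by
      simp only [hp, hq, hdef, inner_sub_right]; ring
    have h3 : |p - q| ≤ ‖nv‖ * ‖f x - f y‖ + (γ:ℝ) * (‖nv‖ * ‖x - y‖) := by
      rw [h2]
      refine (abs_sub _ _).trans ?_
      gcongr
      · rw [abs_neg]; exact (abs_real_inner_le_norm _ _)
      · rw [abs_mul, abs_of_nonneg γ.coe_nonneg]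
        gcongr
        exact abs_real_inner_le_norm _ _
    refine h1.trans (h3.trans ?_)
    have hfl : ‖f x - f y‖ ≤ (L:ℝ) * ‖x - y‖ := by
      have := hf.dist_le_mul x y
      simpa [dist_eq_norm] using this
    rw [dist_eq_norm]
    calc ‖nv‖ * ‖f x - f y‖ + (γ:ℝ) * (‖nv‖ * ‖x - y‖)
        ≤ ‖nv‖ * ((L:ℝ) * ‖x - y‖) + (γ:ℝ) * (‖nv‖ * ‖x - y‖) := by gcongr
      _ = ((L:ℝ) + γ) * ‖nv‖ * ‖x - y‖ := by ring
  rw [udef x, udef y, dist_eq_norm, ← sub_smul, norm_smul, div_sub_div_same,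
    Real.norm_eq_abs, abs_div, abs_of_nonneg (by positivity : (0:ℝ) ≤ ‖nv‖^2)]
  have : |max 0 p - max 0 q| / ‖nv‖ ^ 2 * ‖nv‖ = |max 0 p - max 0 q| / ‖nv‖ := by
    field_simp
  rw [this, div_le_iff₀ hn]
  calc |max 0 p - max 0 q| ≤ ((L:ℝ) + γ) * ‖nv‖ * dist x y := key
    _ = (↑(L + γ)) * dist x y * ‖nv‖ := by push_cast; ring
end
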